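/- arXiv:2412.05344 — 2 statements merged into one kernel-verified Lean document; each statement's English description precedes it below -/
import Mathlib

section
/- Let X be a finite set and p a random joint choice rule with nonnegative Möbius inverse q (complete monotonicity). Then p satisfies across-period increasing differences: for all A ⊆ A', B ⊆ B' with (x,y) ∈ A × B, p(x,y,A,B) - p(x,y,A,B') ≥ p(x,y,A',B) - p(x,y,A',B'). -/
/-!
With `q = mob2 p`, Möbius inversion in each menu coordinate recovers `p x y A B` as the sum of
`q x y C D` over all `C ⊇ A`, `D ⊇ B`. Hence `p x y E B - p x y E B'` is the sum of `q x y C D`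
over `C ⊇ E` and `D ⊇ B` with `D ⊉ B'`; all these terms are nonnegative, and enlarging `E` to
`A'` only drops terms.
-/

open Finset

/-- The Möbius inverse of `p` in the two menu coordinates. -/
noncomputable def mob2 {X : Type*} [Fintype X] [DecidableEq X]
    (p : X → X → Finset X → Finset X → ℝ) (x y : X) (A B : Finset X) : ℝ :=
  ∑ A' ∈ Finset.univ.filter (fun A' => A ⊆ A'),
    ∑ B' ∈ Finset.univ.filter (fun B' => B ⊆ B'),
      (-1 : ℝ) ^ ((A' \ A).card + (B' \ B).card) * p x y A' B'

section UpperMobius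

variable {α R : Type*} [DecidableEq α] [Ring R]

theorem sum_Icc_neg_one_pow_card_sdiff {A B : Finset α} (hAB : A ⊆ B) :
    ∑ C ∈ Icc A B, (-1 : R) ^ #(B \ C) = if A = B then 1 else 0 := by
  have reindex :
      ∑ C ∈ Icc A B, (-1 : R) ^ #(B \ C) = ∑ S ∈ (B \ A).powerset, (-1 : R) ^ #S := by
    refine sum_nbij' (B \ ·) (B \ ·) ?_ ?_ ?_ ?_ fun _ _ => rfl
    · intro C hC
      simp only [mem_Icc, mem_powerset] at hC ⊢
      exact sdiff_subset_sdiff le_rfl hC.1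
    · intro S hS
      simp only [mem_Icc, mem_powerset, subset_sdiff] at hS ⊢
      exact ⟨⟨hAB, hS.2.symm⟩, sdiff_subset⟩
    · intro C hC
      exact Finset.sdiff_sdiff_eq_self (mem_Icc.1 hC).2
    · intro S hS
      exact Finset.sdiff_sdiff_eq_self ((mem_powerset.1 hS).trans sdiff_subset)
  have alternating := congrArg (Int.cast : ℤ → R) (sum_powerset_neg_one_pow_card (x := B \ A))
  push_cast at alternating
  rw [reindex, alternating]
  exact if_congr (sdiff_eq_empty_iff_subset.trans ⟨hAB.antisymm, fun h => h ▸ subset_rfl⟩) rfl rfl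

variable [Fintype α]

def upperMobius (f : Finset α → R) (A : Finset α) : R :=
  ∑ A' ∈ univ.filter (A ⊆ ·), (-1 : R) ^ #(A' \ A) * f A'

theorem sum_superset_upperMobius (f : Finset α → R) (A : Finset α) :
    ∑ C ∈ univ.filter (A ⊆ ·), upperMobius f C = f A := by
  unfold upperMobius
  rw [sum_comm' (t' := univ.filter (A ⊆ ·)) (s' := Icc A) fun C C' => by
    simp only [mem_filter, mem_univ, true_and, mem_Icc]
    exact ⟨fun h => ⟨⟨h.1, h.2⟩, h.1.trans h.2⟩, fun h => h.1⟩]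
  simp_rw [← sum_mul]
  rw [sum_congr rfl fun C' hC' => by
    rw [sum_Icc_neg_one_pow_card_sdiff (mem_filter.1 hC').2]]
  simp

end UpperMobius

section MenuMobius

variable {X : Type*} [Fintype X] [DecidableEq X]

theorem mob2_eq_upperMobius (p : X → X → Finset X → Finset X → ℝ) (x y : X) (A B : Finset X) :
    mob2 p x y A B = upperMobius (fun A' => upperMobius (p x y A') B) A := by
  unfold mob2 upperMobius
  refine sum_congr rfl fun A' _ => ?_
  rw [mul_sum]
  refine sum_congr rfl fun B' _ => ?_
  ring

theorem sum_superset_mob2 (p : X → X → Finset X → Finset X → ℝ) (x y : X) (A B : Finset X) :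
    ∑ C ∈ univ.filter (A ⊆ ·), ∑ D ∈ univ.filter (B ⊆ ·), mob2 p x y C D = p x y A B := by
  simp_rw [mob2_eq_upperMobius]
  rw [sum_comm]
  simp_rw [sum_superset_upperMobius]

theorem sub_eq_sum_mob2 (p : X → X → Finset X → Finset X → ℝ) (x y : X) (E : Finset X)
    {B B' : Finset X} (hB : B ⊆ B') :
    p x y E B - p x y E B' = ∑ C ∈ univ.filter (E ⊆ ·),
      ∑ D ∈ univ.filter (fun D => B ⊆ D ∧ ¬B' ⊆ D), mob2 p x y C D := by
  have hsub : univ.filter (B' ⊆ ·) ⊆ univ.filter (B ⊆ ·) :=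
    monotone_filter_right _ fun _ _ h => hB.trans h
  rw [← sum_superset_mob2 p x y E B, ← sum_superset_mob2 p x y E B', ← sum_sub_distrib]
  refine sum_congr rfl fun C _ => ?_
  rw [filter_and_not, sum_sdiff_eq_sub hsub]

end MenuMobius

theorem stmt2_general {X : Type*} [Fintype X] [DecidableEq X]
    (p : X → X → Finset X → Finset X → ℝ)
    (hq : ∀ (A B : Finset X), ∀ x ∈ A, ∀ y ∈ B, 0 ≤ mob2 p x y A B) :
    ∀ (A A' B B' : Finset X), A ⊆ A' → B ⊆ B' → ∀ x ∈ A, ∀ y ∈ B,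
      p x y A' B - p x y A' B' ≤ p x y A B - p x y A B' := by
  intro A A' B B' hA hB x hx y hy
  rw [sub_eq_sum_mob2 p x y A hB, sub_eq_sum_mob2 p x y A' hB]
  refine sum_le_sum_of_subset_of_nonneg (monotone_filter_right _ fun _ _ h => hA.trans h) ?_
  intro C hC _
  exact sum_nonneg fun D hD => hq C D x ((mem_filter.1 hC).2 hx) y ((mem_filter.1 hD).2.1 hy)

/-- A random joint choice rule with nonnegative Möbius inverse (complete monotonicity)
satisfies across-period increasing differences. -/
theorem stmt2 {X : Type*} [Fintype X] [DecidableEq X]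
    (p : X → X → Finset X → Finset X → ℝ)
    (hnn : ∀ (A B : Finset X), ∀ x ∈ A, ∀ y ∈ B, 0 ≤ p x y A B)
    (hsum : ∀ (A B : Finset X), A.Nonempty → B.Nonempty →
      ∑ x ∈ A, ∑ y ∈ B, p x y A B = 1)
    (hq : ∀ (A B : Finset X), ∀ x ∈ A, ∀ y ∈ B, 0 ≤ mob2 p x y A B) :
    ∀ (A A' B B' : Finset X), A ⊆ A' → B ⊆ B' → ∀ x ∈ A, ∀ y ∈ B,
      p x y A' B - p x y A' B' ≤ p x y A B - p x y A B' :=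
  stmt2_general p hq
end

section
/- Let p be a random choice rule on a finite set X (p(x,A) ≥ 0, Σ_{x∈A} p(x,A) = 1 for all nonempty A ⊆ X) with Möbius inverse q defined by p(x,A) = Σ_{A⊆A'} q(x,A'). Then for every A with ∅ ⊊ A ⊊ X: Σ_{x∈A} q(x,A) = Σ_{z∉A} q(z,A∪{z}). -/
/-!
Expanding both sides by the definition of `q` and exchanging sums, each superset `B ⊇ A`
contributes `(-1)^|B \ A| · Σ_{x ∈ A} p(x,B)` on the left and, since
`|B \ (A ∪ {z})| = |B \ A| - 1` for `z ∈ B \ A`, `-(-1)^|B \ A| · Σ_{z ∈ B \ A} p(z,B)` on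
the right. As `p(·,B)` sums to `1` over `B`, the difference is `Σ_{B ⊇ A} (-1)^|B \ A|`, the
alternating sum over the subsets of the nonempty set `Aᶜ`, which vanishes.
-/

open Finset

/-- The (one-period) Möbius inverse of a random choice rule. -/
noncomputable def mob1 {X : Type*} [Fintype X] [DecidableEq X]
    (p : X → Finset X → ℝ) (x : X) (A : Finset X) : ℝ :=
  ∑ A' ∈ Finset.univ.filter (fun A' => A ⊆ A'), (-1 : ℝ) ^ ((A' \ A).card) * p x A'

section

variable {X : Type*} [DecidableEq X]

lemma neg_one_pow_card_sdiff_insert {R : Type*} [Ring R] {A B : Finset X} {z : X}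
    (hzB : z ∈ B) (hzA : z ∉ A) :
    (-1 : R) ^ (B \ insert z A).card = -(-1) ^ (B \ A).card := by
  rw [sdiff_insert, ← card_erase_add_one (mem_sdiff.2 ⟨hzB, hzA⟩) (a := z), pow_succ]
  simp

variable [Fintype X]

lemma sum_supersets_neg_one_pow_card_sdiff {R : Type*} [Ring R] {A : Finset X}
    (hA : A ≠ univ) :
    ∑ B ∈ univ.filter (A ⊆ ·), (-1 : R) ^ (B \ A).card = 0 := by
  have reindex : ∑ B ∈ univ.filter (A ⊆ ·), (-1 : R) ^ (B \ A).card
      = ∑ C ∈ Aᶜ.powerset, (-1 : R) ^ C.card := by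
    refine sum_nbij' (· \ A) (A ∪ ·) ?_ ?_ ?_ ?_ fun _ _ => rfl
    · intro B _
      simp [subset_iff]
    · intro C _
      simp
    · intro B hB
      exact union_sdiff_of_subset (mem_filter.1 hB).2
    · intro C hC
      exact union_sdiff_cancel_left <|
        disjoint_of_subset_right (mem_powerset.1 hC) disjoint_compl_right
  have hAc : Aᶜ.Nonempty := by simpa [nonempty_iff_ne_empty] using hA
  have hsum_int := congrArg (Int.cast : ℤ → R) (sum_powerset_neg_one_pow_card_of_nonempty hAc)
  push_cast at hsum_int
  rw [reindex, hsum_int]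

lemma sum_mob1 (p : X → Finset X → ℝ) (A : Finset X) :
    ∑ x ∈ A, mob1 p x A
      = ∑ B ∈ univ.filter (A ⊆ ·), (-1 : ℝ) ^ (B \ A).card * ∑ x ∈ A, p x B := by
  simp only [mob1, mul_sum]
  exact sum_comm

lemma sum_compl_mob1_insert (p : X → Finset X → ℝ) (A : Finset X) :
    ∑ z ∈ Aᶜ, mob1 p z (insert z A)
      = -∑ B ∈ univ.filter (A ⊆ ·), (-1 : ℝ) ^ (B \ A).card * ∑ z ∈ B \ A, p z B := by
  rw [← sum_neg_distrib]
  unfold mob1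
  rw [sum_comm' (t' := univ.filter (A ⊆ ·)) (s' := (· \ A))]
  · refine sum_congr rfl fun B _ => ?_
    rw [mul_sum, ← sum_neg_distrib]
    refine sum_congr rfl fun z hz => ?_
    rw [neg_one_pow_card_sdiff_insert (mem_sdiff.1 hz).1 (mem_sdiff.1 hz).2, neg_mul]
  · intro z B
    simp only [mem_compl, mem_filter, mem_univ, true_and, mem_sdiff, insert_subset_iff]
    tauto

end

theorem stmt19_general {X : Type*} [Fintype X] [DecidableEq X]
    (p : X → Finset X → ℝ)
    (hsum : ∀ A : Finset X, A.Nonempty → ∑ x ∈ A, p x A = 1) :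
    ∀ A : Finset X, A.Nonempty → A ≠ Finset.univ →
      ∑ x ∈ A, mob1 p x A = ∑ z ∈ Aᶜ, mob1 p z (insert z A) := by
  intro A hA hAu
  have outflow : ∀ B ∈ univ.filter (A ⊆ ·), ∑ z ∈ B \ A, p z B = 1 - ∑ x ∈ A, p x B := by
    intro B hB
    have hAB := (mem_filter.1 hB).2
    rw [sum_sdiff_eq_sub hAB, hsum B (hA.mono hAB)]
  rw [sum_mob1, sum_compl_mob1_insert, eq_neg_iff_add_eq_zero, ← sum_add_distrib,
    ← sum_supersets_neg_one_pow_card_sdiff hAu]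
  refine sum_congr rfl fun B hB => ?_
  rw [outflow B hB]
  ring

/-- Inflow-equals-outflow (Falmagne 1978): for any random choice rule `p` with Möbius
inverse `q`, for every `∅ ⊊ A ⊊ X`, `Σ_{x∈A} q(x,A) = Σ_{z∉A} q(z,A∪{z})`. -/
theorem stmt19 {X : Type*} [Fintype X] [DecidableEq X]
    (p : X → Finset X → ℝ)
    (hnn : ∀ (A : Finset X), ∀ x ∈ A, 0 ≤ p x A)
    (hsum : ∀ A : Finset X, A.Nonempty → ∑ x ∈ A, p x A = 1) :
    ∀ A : Finset X, A.Nonempty → A ≠ Finset.univ →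
      ∑ x ∈ A, mob1 p x A = ∑ z ∈ Aᶜ, mob1 p z (insert z A) :=
  stmt19_general p hsum
end
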